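/- For every g ≥ 2, the genus-g surface group Π_g has trivial center. -/

import Mathlib

/-!
Cutting a closed surface of genus `p + q` along a separating curve exhibits `Π_{p+q}` as the
amalgamated product of the free groups on `a₁, b₁, …, a_p, b_p` and on `a_{p+1}, …, b_{p+q}` over
the infinite cyclic group generated by the curve `[a₁,b₁]⋯[a_p,b_p]`.

In an amalgam of at least two groups in which the amalgamated subgroup has proper normal closure
in every factor, a central element lies in the amalgamated subgroup: otherwise its commutator
with a suitably chosen single letter is a nonempty reduced word, which the normal form theorem
forbids to be trivial. Here the amalgamated subgroup lies in the commutator subgroup of each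
factor, so its normal closure is proper, and a central element of the amalgam lying in it is
central in a nonabelian free factor. Nonabelian free groups have trivial center by the same
statement, applied to a free group as the free product of infinite cyclic groups.
-/

open scoped commutatorElement

/-- The genus-`g` surface relator `[a₁,b₁][a₂,b₂]⋯[a_g,b_g]` in the free group on
generators `a₁, b₁, …, a_g, b_g` (with `aᵢ = of (Sum.inl i)`, `bᵢ = of (Sum.inr i)`). -/
def surfaceRelator (g : ℕ) : FreeGroup (Fin g ⊕ Fin g) :=
  (List.ofFn fun i : Fin g =>
    ⁅(FreeGroup.of (Sum.inl i) : FreeGroup (Fin g ⊕ Fin g)),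
      FreeGroup.of (Sum.inr i)⁆).prod

/-- The genus-`g` surface group `Π_g`, presented on `a₁, b₁, …, a_g, b_g` with the
single relator `[a₁,b₁][a₂,b₂]⋯[a_g,b_g]`. -/
def SurfaceGroup (g : ℕ) : Type :=
  PresentedGroup ({surfaceRelator g} : Set (FreeGroup (Fin g ⊕ Fin g)))

instance (g : ℕ) : Group (SurfaceGroup g) :=
  inferInstanceAs (Group (PresentedGroup _))

open Monoid

namespace Subgroup

variable {G K : Type*} [Group G] [Group K]

theorem exists_forall_conj_notMem_of_normalClosure_ne_top {s : Set G}
    (hs : normalClosure s ≠ ⊤) : ∃ c : G, ∀ u, u * c * u⁻¹ ∉ s := by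
  by_contra! h
  refine hs (eq_top_iff.2 fun c _ => ?_)
  obtain ⟨u, hu⟩ := h c
  have := (normalClosure_normal (s := s)).conj_mem _ (subset_normalClosure hu) u⁻¹
  rwa [show u⁻¹ * (u * c * u⁻¹) * u⁻¹⁻¹ = c by group] at this

theorem center_eq_bot_of_mulEquiv (e : G ≃* K) (h : center K = ⊥) : center G = ⊥ := by
  refine eq_bot_iff.2 fun z hz => e.injective ?_
  rw [map_one, ← mem_bot, ← h, mem_center_iff]
  exact fun x => by simpa using congrArg e (mem_center_iff.1 hz (e.symm x))

end Subgroup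

namespace Monoid.CoprodI.NeWord

variable {ι : Type*} {M : ι → Type*} [∀ i, Monoid (M i)]

theorem fst_eq_of_toList_eq_singleton {i j : ι} {w : NeWord M i j} {x : Σ i, M i}
    (h : w.toList = [x]) : i = x.1 := by
  have := w.toList_head?
  simp_all

theorem toList_eq_append_last : ∀ {i j : ι} (w : NeWord M i j),
    w.toList = [⟨j, w.last⟩] ∨
      ∃ (k : ι) (w' : NeWord M i k), k ≠ j ∧ w.toList = w'.toList ++ [⟨j, w.last⟩]
  | _, _, singleton _ _ => .inl rfl
  | _, _, append w₁ hne w₂ => by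
    refine .inr ?_
    rcases toList_eq_append_last w₂ with h | ⟨k, w', hk, h⟩
    · obtain rfl := fst_eq_of_toList_eq_singleton h
      exact ⟨_, w₁, hne, by simp [h]⟩
    · exact ⟨k, append w₁ hne w', hk, by simp [h]⟩

end Monoid.CoprodI.NeWord

namespace Monoid.PushoutI

variable {ι : Type*} {G : ι → Type*} [∀ i, Group (G i)] {H : Type*} [Group H]
  {φ : ∀ i, H →* G i}

theorem reduced_toWord_iff {i j : ι} (w : CoprodI.NeWord G i j) :
    Reduced φ w.toWord ↔ ∀ g ∈ w.toList, g.2 ∉ (φ g.1).range :=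
  Iff.rfl

@[simp]
theorem reduced_singleton_iff {i : ι} {x : G i} (hx : x ≠ 1) :
    Reduced φ (CoprodI.NeWord.singleton x hx).toWord ↔ x ∉ (φ i).range := by
  simp [reduced_toWord_iff]

@[simp]
theorem reduced_append_iff {i j k l : ι} {w₁ : CoprodI.NeWord G i j} {hne : j ≠ k}
    {w₂ : CoprodI.NeWord G k l} :
    Reduced φ (w₁.append hne w₂).toWord ↔ Reduced φ w₁.toWord ∧ Reduced φ w₂.toWord := by
  simp [reduced_toWord_iff, or_imp, forall_and]

theorem Reduced.neWord_inv {i j : ι} {w : CoprodI.NeWord G i j} (hw : Reduced φ w.toWord) :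
    Reduced φ w.inv.toWord := by
  induction w with
  | singleton x hx => simpa [CoprodI.NeWord.inv] using hw
  | append w₁ hne w₂ ih₁ ih₂ =>
    rw [reduced_append_iff] at hw
    exact reduced_append_iff.2 ⟨ih₂ hw.2, ih₁ hw.1⟩

theorem Reduced.replaceHead {i j : ι} {w : CoprodI.NeWord G i j} (hw : Reduced φ w.toWord)
    {x : G i} (hx : x ∉ (φ i).range) (hx1 : x ≠ 1) :
    Reduced φ (w.replaceHead x hx1).toWord := by
  induction w with
  | singleton => simpa [CoprodI.NeWord.replaceHead] using hx
  | append w₁ hne w₂ ih₁ ih₂ =>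
    rw [reduced_append_iff] at hw
    exact reduced_append_iff.2 ⟨ih₁ hw.1 hx hx1, hw.2⟩

theorem NormalWord.reduced {d : NormalWord.Transversal φ} (w : NormalWord d) :
    Reduced φ w.toWord := by
  -- The transversal and the range of `φ` are complements that both contain `1`.
  intro g hg hmem
  have hset : g.2 ∈ d.set g.1 := w.normalized g.1 g.2 hg
  refine w.ne_one g hg ?_
  have h := (d.compl g.1).equiv_snd_eq_self_of_mem_of_one_mem (one_mem _) hset
  rw [(d.compl g.1).equiv_snd_eq_one_of_mem_of_one_mem (d.one_mem g.1) hmem] at h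
  exact (congrArg Subtype.val h).symm

theorem exists_reduced_neWord_of_notMem_range_base (hφ : ∀ i, Function.Injective (φ i))
    {z : PushoutI φ} (hz : z ∉ (base φ).range) :
    ∃ (i j : ι) (w : CoprodI.NeWord G i j), Reduced φ w.toWord ∧ ofCoprodI w.prod = z := by
  classical
  obtain ⟨d⟩ := NormalWord.transversal_nonempty φ hφ
  let W : NormalWord d := z • NormalWord.empty
  have hW : base φ W.head * ofCoprodI W.toWord.prod = z := by
    rw [← NormalWord.prod, NormalWord.prod_smul, NormalWord.prod_empty, mul_one]
  have hne : W.toWord ≠ .empty := by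
    intro h
    rw [h, CoprodI.Word.prod_empty, map_one, mul_one] at hW
    exact hz ⟨_, hW⟩
  obtain ⟨i, j, w, hw⟩ := CoprodI.NeWord.of_word _ hne
  have hred : Reduced φ w.toWord := hw ▸ W.reduced
  have hhead : w.head ∉ (φ i).range :=
    hred _ (List.mem_of_mem_head? w.toList_head?)
  have hx : φ i W.head * w.head ∉ (φ i).range := by
    rwa [Subgroup.mul_mem_cancel_left _ (MonoidHom.mem_range.2 ⟨_, rfl⟩)]
  have hx1 : φ i W.head * w.head ≠ 1 := fun h => hx (h ▸ one_mem _)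
  refine ⟨i, j, w.mulHead _ hx1, hred.replaceHead hx hx1, ?_⟩
  rw [CoprodI.NeWord.mulHead_prod, map_mul, ofCoprodI_of, of_apply_eq_base,
    CoprodI.NeWord.prod, hw, hW]

theorem mul_of_mul_inv_mul_of_ne_one (hφ : ∀ i, Function.Injective (φ i)) {i j k : ι}
    {w : CoprodI.NeWord G i j} (hw : Reduced φ w.toWord) (hik : i ≠ k) (hjk : j ≠ k)
    {x y : G k} (hx : x ∉ (φ k).range) (hy : y ∉ (φ k).range) :
    ofCoprodI (φ := φ) w.prod * of k x * (ofCoprodI w.prod)⁻¹ * of k y ≠ 1 := by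
  have hx1 : x ≠ 1 := fun h => hx (h ▸ one_mem _)
  have hy1 : y ≠ 1 := fun h => hy (h ▸ one_mem _)
  let v : CoprodI.NeWord G i k :=
    ((w.append hjk (.singleton x hx1)).append hjk.symm w.inv).append hik (.singleton y hy1)
  have hv : Reduced φ v.toWord := by simp [v, hw, hw.neWord_inv, hx, hy]
  intro h
  have hv1 : ofCoprodI (φ := φ) v.prod = 1 := by simpa [v, mul_assoc] using h
  exact v.toList_ne_nil (congrArg CoprodI.Word.toList
    (hv.eq_empty_of_mem_range hφ (hv1 ▸ one_mem (base φ).range)))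

theorem center_le_range_base [Nontrivial ι] (hφ : ∀ i, Function.Injective (φ i))
    (hnc : ∀ i, Subgroup.normalClosure ((φ i).range : Set (G i)) ≠ ⊤) :
    Subgroup.center (PushoutI φ) ≤ (base φ).range := by
  intro z hz
  by_contra hzb
  obtain ⟨i, j, w, hw, rfl⟩ := exists_reduced_neWord_of_notMem_range_base hφ hzb
  have hcomm : ∀ {k} (c : G k),
      ofCoprodI (φ := φ) w.prod * of k c * (ofCoprodI w.prod)⁻¹ * of k c⁻¹ = 1 := by
    intro k c
    rw [← Subgroup.mem_center_iff.1 hz (of k c), map_inv]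
    group
  have hconj : ∀ k, ∃ c : G k, ∀ u, u * c * u⁻¹ ∉ (φ k).range := fun k =>
    Subgroup.exists_forall_conj_notMem_of_normalClosure_ne_top (hnc k)
  -- If `w` starts and ends in the same factor, commute it with a letter from another factor;
  -- otherwise commute it with a letter `c` from its last factor, absorbing that last letter `ℓ`
  -- into the conjugate `ℓ c ℓ⁻¹`.
  by_cases hij : i = j
  · subst hij
    obtain ⟨k, hki⟩ := exists_ne i
    obtain ⟨c, hc⟩ := hconj k
    have hc₁ : c ∉ (φ k).range := by simpa using hc 1
    exact mul_of_mul_inv_mul_of_ne_one hφ hw hki.symm hki.symm hc₁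
      (by rwa [inv_mem_iff]) (hcomm c)
  · rcases w.toList_eq_append_last with h | ⟨k, w', hkj, h⟩
    · exact hij (CoprodI.NeWord.fst_eq_of_toList_eq_singleton h)
    have hw' : Reduced φ w'.toWord := by
      rw [reduced_toWord_iff, h] at hw
      exact fun g hg => hw g (List.mem_append_left _ hg)
    have hprod : w.prod = w'.prod * CoprodI.of w.last := by
      simp [CoprodI.NeWord.prod, CoprodI.Word.prod, CoprodI.NeWord.toWord, h]
    obtain ⟨c, hc⟩ := hconj j
    have hc₁ : c ∉ (φ j).range := by simpa using hc 1
    refine mul_of_mul_inv_mul_of_ne_one hφ hw' hij hkj (hc w.last) (by rwa [inv_mem_iff]) ?_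
    simpa [hprod, mul_assoc] using hcomm c

theorem center_eq_bot [Nontrivial ι] (hφ : ∀ i, Function.Injective (φ i))
    (hnc : ∀ i, Subgroup.normalClosure ((φ i).range : Set (G i)) ≠ ⊤)
    (hcenter : ∀ i, Subgroup.center (G i) = ⊥) :
    Subgroup.center (PushoutI φ) = ⊥ := by
  refine eq_bot_iff.2 fun z hz => ?_
  obtain ⟨h, rfl⟩ := center_le_range_base hφ hnc hz
  obtain ⟨i⟩ := ‹Nontrivial ι›.to_nonempty
  have hh : φ i h ∈ Subgroup.center (G i) := Subgroup.mem_center_iff.2 fun x =>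
    of_injective hφ i (by simpa [of_apply_eq_base] using Subgroup.mem_center_iff.1 hz (of i x))
  rw [hcenter i, Subgroup.mem_bot, ← map_one (φ i)] at hh
  rw [hφ i hh, map_one]
  exact one_mem _

end Monoid.PushoutI

instance Sum.nontrivial_of_nonempty {α β : Type*} [Nonempty α] [Nonempty β] :
    Nontrivial (α ⊕ β) :=
  ⟨⟨.inl (Classical.arbitrary α), .inr (Classical.arbitrary β), Sum.inl_ne_inr⟩⟩

namespace FreeGroup

variable {α : Type*}

def mulEquivPushoutI : FreeGroup α ≃* PushoutI fun _ : α => (1 : Unit →* FreeGroup Unit) :=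
  MonoidHom.toMulEquiv (lift fun a => PushoutI.of a (of ()))
    (PushoutI.lift (fun a => lift fun _ => of a) 1 fun _ => Subsingleton.elim _ _)
    (by ext; simp)
    (PushoutI.hom_ext (fun _ => by ext; simp) (Subsingleton.elim _ _))

theorem center_eq_bot [Nontrivial α] : Subgroup.center (FreeGroup α) = ⊥ := by
  refine Subgroup.center_eq_bot_of_mulEquiv mulEquivPushoutI (eq_bot_iff.2 ?_)
  refine (PushoutI.center_le_range_base (fun _ => Function.injective_of_subsingleton _)
    fun _ => ?_).trans ?_
  · rw [MonoidHom.range_one, Subgroup.normalClosure_eq_bot_iff.2 (by simp)]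
    exact bot_ne_top
  · rw [Subsingleton.elim (PushoutI.base _) 1, MonoidHom.range_one]

theorem lift_injective_of_ne_one {G : Type*} [Group G] [IsMulTorsionFree G] {g : G}
    (hg : g ≠ 1) : Function.Injective (lift fun _ : Unit => g) := by
  refine (injective_iff_map_eq_one _).2 fun x hx => ?_
  have hx' : x = of () ^ freeGroupUnitEquivInt x :=
    (freeGroupUnitEquivInt.symm_apply_apply x).symm
  rw [hx', map_zpow, lift_apply_of, IsMulTorsionFree.zpow_eq_one_iff_right hg] at hx
  rw [hx', hx, zpow_zero]

theorem commutator_ne_top [Nonempty α] : commutator (FreeGroup α) ≠ ⊤ := by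
  intro h
  obtain ⟨a⟩ := ‹Nonempty α›
  have := Abelianization.commutator_subset_ker (lift fun _ : α => Multiplicative.ofAdd (1 : ℤ))
    (h ▸ Subgroup.mem_top (of a))
  simp at this

theorem normalClosure_range_lift_ne_top [Nonempty α] {r : FreeGroup α}
    (hr : r ∈ commutator (FreeGroup α)) :
    Subgroup.normalClosure ((lift fun _ : Unit => r).range : Set (FreeGroup α)) ≠ ⊤ :=
  ne_top_of_le_ne_top commutator_ne_top <| Subgroup.normalClosure_le_normal <|
    range_lift_le (by simpa using hr)

end FreeGroup

theorem surfaceRelator_mem_commutator (g : ℕ) :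
    surfaceRelator g ∈ commutator (FreeGroup (Fin g ⊕ Fin g)) := by
  refine list_prod_mem fun x hx => ?_
  obtain ⟨i, rfl⟩ := List.mem_ofFn.1 hx
  exact Subgroup.commutator_mem_commutator (Subgroup.mem_top _) (Subgroup.mem_top _)

theorem surfaceRelator_ne_one {g : ℕ} (hg : g ≠ 0) : surfaceRelator g ≠ 1 := by
  obtain ⟨g, rfl⟩ := Nat.exists_eq_succ_of_ne_zero hg
  intro h
  let f : Fin (g + 1) ⊕ Fin (g + 1) → Equiv.Perm (Fin 3) :=
    Sum.elim (fun i => if i = 0 then Equiv.swap 0 1 else 1)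
      (fun i => if i = 0 then Equiv.swap 1 2 else 1)
  have := congrArg (FreeGroup.lift f) h
  simp [surfaceRelator, map_list_prod, List.map_ofFn, Function.comp_def, map_commutatorElement,
    List.ofFn_succ, f] at this
  exact absurd this (by decide)

namespace SurfaceGroup

open PushoutI

variable (p q : ℕ)

def pieceGenerator : ∀ b : Bool, Fin (cond b q p) ⊕ Fin (cond b q p) → Fin (p + q) ⊕ Fin (p + q)
  | false => Sum.map (Fin.castAdd q) (Fin.castAdd q)
  | true => Sum.map (Fin.natAdd p) (Fin.natAdd p)

theorem exists_pieceGenerator_eq (x : Fin (p + q) ⊕ Fin (p + q)) :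
    ∃ b y, pieceGenerator p q b y = x := by
  rcases x with x | x <;> induction x using Fin.addCases
  exacts [⟨false, .inl _, rfl⟩, ⟨true, .inl _, rfl⟩, ⟨false, .inr _, rfl⟩, ⟨true, .inr _, rfl⟩]

theorem surfaceRelator_add :
    surfaceRelator (p + q) = FreeGroup.map (pieceGenerator p q false) (surfaceRelator p) *
      FreeGroup.map (pieceGenerator p q true) (surfaceRelator q) := by
  simp [surfaceRelator, List.ofFn_add, map_list_prod, List.map_ofFn, Function.comp_def,
    map_commutatorElement, pieceGenerator]
  -- `List.ofFn_add` splits along `Fin.castLE`, which agrees with `Fin.castAdd` definitionally.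
  rfl

-- The two pieces induce opposite orientations on the separating curve.
def boundaryWord : ∀ b : Bool, FreeGroup (Fin (cond b q p) ⊕ Fin (cond b q p))
  | false => surfaceRelator p
  | true => (surfaceRelator q)⁻¹

def boundaryInclusion (b : Bool) :
    FreeGroup Unit →* FreeGroup (Fin (cond b q p) ⊕ Fin (cond b q p)) :=
  FreeGroup.lift fun _ => boundaryWord p q b

abbrev Amalgam := PushoutI (boundaryInclusion p q)

theorem of_boundaryWord (b : Bool) :
    of (φ := boundaryInclusion p q) b (boundaryWord p q b) = base _ (FreeGroup.of ()) := by
  rw [← of_apply_eq_base _ b, boundaryInclusion, FreeGroup.lift_apply_of]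

def toAmalgamGenerator : Fin (p + q) ⊕ Fin (p + q) → Amalgam p q :=
  Sum.elim
    (Fin.addCases (fun i => of false (FreeGroup.of (.inl i)))
      (fun j => of true (FreeGroup.of (.inl j))))
    (Fin.addCases (fun i => of false (FreeGroup.of (.inr i)))
      (fun j => of true (FreeGroup.of (.inr j))))

theorem toAmalgamGenerator_pieceGenerator (b : Bool) (x : Fin (cond b q p) ⊕ Fin (cond b q p)) :
    toAmalgamGenerator p q (pieceGenerator p q b x) = of b (FreeGroup.of x) := by
  cases b <;> rcases x with x | x <;> simp [toAmalgamGenerator, pieceGenerator]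

theorem lift_toAmalgamGenerator_comp_map (b : Bool) :
    (FreeGroup.lift (toAmalgamGenerator p q)).comp (FreeGroup.map (pieceGenerator p q b)) =
      of (φ := boundaryInclusion p q) b := by
  ext x
  simp [toAmalgamGenerator_pieceGenerator]

theorem lift_toAmalgamGenerator_surfaceRelator :
    FreeGroup.lift (toAmalgamGenerator p q) (surfaceRelator (p + q)) = 1 := by
  rw [surfaceRelator_add, map_mul, ← MonoidHom.comp_apply, ← MonoidHom.comp_apply,
    lift_toAmalgamGenerator_comp_map, lift_toAmalgamGenerator_comp_map]
  have h₁ := of_boundaryWord p q false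
  have h₂ := of_boundaryWord p q true
  simp only [boundaryWord, map_inv] at h₁ h₂
  rw [h₁, ← h₂, inv_mul_cancel]

-- Typed by the presentation rather than by `SurfaceGroup`, whose `Group` instance is not
-- reducibly that of the quotient, so that `simp` and `rw` apply to these maps.
def toAmalgam : PresentedGroup {surfaceRelator (p + q)} →* Amalgam p q :=
  PresentedGroup.toGroup fun _ hr => (Set.mem_singleton_iff.1 hr) ▸
    lift_toAmalgamGenerator_surfaceRelator p q

def ofPiece (b : Bool) :
    FreeGroup (Fin (cond b q p) ⊕ Fin (cond b q p)) →* PresentedGroup {surfaceRelator (p + q)} :=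
  (PresentedGroup.mk _).comp (FreeGroup.map (pieceGenerator p q b))

theorem ofPiece_comp_boundaryInclusion (b : Bool) :
    (ofPiece p q b).comp (boundaryInclusion p q b) =
      (ofPiece p q false).comp (boundaryInclusion p q false) := by
  cases b
  · rfl
  · have h : PresentedGroup.mk {surfaceRelator (p + q)}
        (FreeGroup.map (pieceGenerator p q false) (surfaceRelator p) *
          FreeGroup.map (pieceGenerator p q true) (surfaceRelator q)) = 1 := by
      rw [← surfaceRelator_add]
      exact PresentedGroup.one_of_mem rfl
    ext
    simp only [MonoidHom.comp_apply, ofPiece, boundaryInclusion, FreeGroup.lift_apply_of,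
      boundaryWord, map_inv, map_mul] at h ⊢
    exact inv_eq_of_mul_eq_one_left h

def fromAmalgam : Amalgam p q →* PresentedGroup {surfaceRelator (p + q)} :=
  PushoutI.lift (ofPiece p q) _ (ofPiece_comp_boundaryInclusion p q)

def equivAmalgam : SurfaceGroup (p + q) ≃* Amalgam p q :=
  MonoidHom.toMulEquiv (toAmalgam p q) (fromAmalgam p q)
    (PresentedGroup.ext fun x => by
      obtain ⟨b, y, rfl⟩ := exists_pieceGenerator_eq p q x
      change fromAmalgam p q (toAmalgam p q (PresentedGroup.of _)) = PresentedGroup.of _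
      rw [toAmalgam, PresentedGroup.toGroup.of, toAmalgamGenerator_pieceGenerator, fromAmalgam,
        lift_of]
      rfl)
    (PushoutI.hom_ext_nonempty fun b => by
      ext x
      change toAmalgam p q (PresentedGroup.of (pieceGenerator p q b x)) = of b (FreeGroup.of x)
      rw [toAmalgam, PresentedGroup.toGroup.of, toAmalgamGenerator_pieceGenerator])

variable {p q} in
theorem boundaryWord_ne_one (hp : p ≠ 0) (hq : q ≠ 0) (b : Bool) : boundaryWord p q b ≠ 1 := by
  cases b
  exacts [surfaceRelator_ne_one hp, inv_ne_one.2 (surfaceRelator_ne_one hq)]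

theorem boundaryWord_mem_commutator (b : Bool) :
    boundaryWord p q b ∈ commutator (FreeGroup (Fin (cond b q p) ⊕ Fin (cond b q p))) := by
  cases b
  exacts [surfaceRelator_mem_commutator p, inv_mem (surfaceRelator_mem_commutator q)]

variable {p q} in
theorem center_add_eq_bot (hp : p ≠ 0) (hq : q ≠ 0) :
    Subgroup.center (SurfaceGroup (p + q)) = ⊥ := by
  have (b : Bool) : NeZero (cond b q p) := ⟨by cases b <;> assumption⟩
  exact Subgroup.center_eq_bot_of_mulEquiv (equivAmalgam p q) <| PushoutI.center_eq_bot
    (fun b => FreeGroup.lift_injective_of_ne_one (boundaryWord_ne_one hp hq b))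
    (fun b => FreeGroup.normalClosure_range_lift_ne_top (boundaryWord_mem_commutator p q b))
    fun _ => FreeGroup.center_eq_bot

end SurfaceGroup

/-- For `g ≥ 2`, the genus-`g` surface group has trivial center. -/
theorem center_surfaceGroup_eq_bot (g : ℕ) (hg : 2 ≤ g) :
    Subgroup.center (SurfaceGroup g) = ⊥ := by
  obtain ⟨q, rfl⟩ : ∃ q, g = 1 + q := ⟨g - 1, by omega⟩
  exact SurfaceGroup.center_add_eq_bot one_ne_zero (by omega)
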